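/- arXiv:2404.17870 — 2 statements merged into one kernel-verified Lean document; each statement's English description precedes it below -/
import Mathlib

section
/- Under the Arnoldi relation A V_m = V_{m+1} H̄_m with H_m invertible, the generalized eigenvalue problem θ H̄_m^T H̄_m g = H_m^T g is equivalent to the standard eigenvalue problem (H_m + h_{m+1,m}^2 H_m^{-T} e_m e_m^T) g = θ^{-1} g for θ ≠ 0: g solves the first with value θ if and only if g solves the second with value θ^{-1}. -/
/-!
Deleting the last row of `H̄ₘ`, which is `h_{m+1,m} eₘᵀ`, gives
`H̄ₘᵀ H̄ₘ = Hₘᵀ Hₘ + h_{m+1,m}² eₘ eₘᵀ`. Hence `Hₘ⁻ᵀ H̄ₘᵀ H̄ₘ = Hₘ + h_{m+1,m}² Hₘ⁻ᵀ eₘ eₘᵀ`, and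
multiplying `θ H̄ₘᵀ H̄ₘ g = Hₘᵀ g` by `θ⁻¹ Hₘ⁻ᵀ` turns it into the standard eigenvalue problem.
-/

open Matrix

namespace Matrix

theorem transpose_mul_self_eq_add_vecMulVec_last {R ι : Type*} [CommSemiring R] [Fintype ι]
    {k : ℕ} (B : Matrix (Fin (k + 1)) ι R) :
    Bᵀ * B = (B.submatrix Fin.castSucc id)ᵀ * B.submatrix Fin.castSucc id +
      vecMulVec (B (Fin.last k)) (B (Fin.last k)) := by
  ext i j
  simp [mul_apply, vecMulVec_apply, Fin.sum_univ_castSucc]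

theorem vecMulVec_pi_single_self {R ι : Type*} [MulZeroClass R] [DecidableEq ι] (i : ι) (a : R) :
    vecMulVec (Pi.single i a) (Pi.single i a) = single i i (a * a) := by
  ext k l
  simp only [vecMulVec_apply, single_apply, Pi.single_apply]
  split_ifs <;> aesop

theorem smul_mulVec_eq_mulVec_iff_inv_mul_mulVec {K ι : Type*} [Field K] [Fintype ι]
    [DecidableEq ι] (G B : Matrix ι ι K) (hB : IsUnit B.det) {θ : K} (hθ : θ ≠ 0) (g : ι → K) :
    θ • G *ᵥ g = B *ᵥ g ↔ (B⁻¹ * G) *ᵥ g = θ⁻¹ • g := by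
  have hBinj : Function.Injective B.mulVec :=
    mulVec_injective_iff_isUnit.mpr ((isUnit_iff_isUnit_det B).mpr hB)
  rw [← hBinj.eq_iff (a := (B⁻¹ * G) *ᵥ g), mulVec_mulVec, mul_nonsing_inv_cancel_left _ _ hB,
    mulVec_smul, eq_inv_smul_iff₀ hθ, eq_comm]

end Matrix

theorem stmt3_general {n : ℕ}
    (Hbar : Matrix (Fin (n + 2)) (Fin (n + 1)) ℝ)
    (H : Matrix (Fin (n + 1)) (Fin (n + 1)) ℝ)
    (hH : H = Hbar.submatrix Fin.castSucc id)
    (hlastrow : ∀ j : Fin (n + 1), j ≠ Fin.last n → Hbar (Fin.last (n + 1)) j = 0)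
    (hinv : IsUnit H.det)
    (θ : ℝ) (hθ : θ ≠ 0) (g : Fin (n + 1) → ℝ) :
    θ • (Hbarᵀ * Hbar).mulVec g = Hᵀ.mulVec g ↔
      (H + Hbar (Fin.last (n + 1)) (Fin.last n) ^ 2 •
          (Hᵀ⁻¹ * Matrix.single (Fin.last n) (Fin.last n) (1 : ℝ))).mulVec g =
        θ⁻¹ • g := by
  set h := Hbar (Fin.last (n + 1)) (Fin.last n)
  have hHT : IsUnit Hᵀ.det := by rwa [det_transpose]
  have hrow : Hbar (Fin.last (n + 1)) = Pi.single (Fin.last n) h := by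
    ext j
    by_cases hj : j = Fin.last n
    · simp [hj, h]
    · simp [hj, hlastrow j hj]
  have hgram : Hbarᵀ * Hbar = Hᵀ * H + h ^ 2 • single (Fin.last n) (Fin.last n) 1 := by
    rw [transpose_mul_self_eq_add_vecMulVec_last, ← hH, hrow, vecMulVec_pi_single_self,
      smul_single, smul_eq_mul, mul_one, sq]
  rw [smul_mulVec_eq_mulVec_iff_inv_mul_mulVec _ _ hHT hθ, hgram, Matrix.mul_add, Matrix.mul_smul,
    nonsing_inv_mul_cancel_left _ _ hHT]

theorem stmt3 {n : ℕ}
    (Hbar : Matrix (Fin (n + 2)) (Fin (n + 1)) ℝ)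
    (H : Matrix (Fin (n + 1)) (Fin (n + 1)) ℝ)
    (hH : H = Hbar.submatrix Fin.castSucc id)
    (hhess : ∀ (i : Fin (n + 2)) (j : Fin (n + 1)), (j : ℕ) + 1 < (i : ℕ) → Hbar i j = 0)
    (hlastrow : ∀ j : Fin (n + 1), j ≠ Fin.last n → Hbar (Fin.last (n + 1)) j = 0)
    (hinv : IsUnit H.det)
    (θ : ℝ) (hθ : θ ≠ 0) (g : Fin (n + 1) → ℝ) (hg : g ≠ 0) :
    θ • (Hbarᵀ * Hbar).mulVec g = Hᵀ.mulVec g ↔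
      (H + Hbar (Fin.last (n + 1)) (Fin.last n) ^ 2 •
          (Hᵀ⁻¹ * Matrix.single (Fin.last n) (Fin.last n) (1 : ℝ))).mulVec g =
        θ⁻¹ • g :=
  stmt3_general Hbar H hH hlastrow hinv θ hθ g
end

section
/- For the GMRES least-squares problem min_y ‖β e₁ − H̄_m y‖₂ with H̄_m as above, the minimal residual norm equals β |h_{m+1,m}| |e₁^T H_m^{-T} e_m| / √(1 + h_{m+1,m}² ‖H_m^{-T} e_m‖²). -/
open Matrix

/-- The Euclidean (2-)norm of a vector in `ℝ^k`. -/
noncomputable def l2norm {k : ℕ} (x : Fin k → ℝ) : ℝ := Real.sqrt (∑ i, x i ^ 2)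

theorem stmt7 {n : ℕ}
    (Hbar : Matrix (Fin (n + 2)) (Fin (n + 1)) ℝ)
    (hlastrow : ∀ j : Fin (n + 1), j ≠ Fin.last n → Hbar (Fin.last (n + 1)) j = 0)
    (hinv : IsUnit (Hbar.submatrix Fin.castSucc id).det)
    (β : ℝ) (hβ : 0 < β)
    (c : Fin (n + 2) → ℝ) (hc : ∀ i, c i = if i = 0 then β else 0)
    (ym : Fin (n + 1) → ℝ)
    (hmin : ∀ y : Fin (n + 1) → ℝ,
      l2norm (c - Hbar.mulVec ym) ≤ l2norm (c - Hbar.mulVec y))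
    (f : Fin (n + 1) → ℝ)
    (hf : f = ((Hbar.submatrix Fin.castSucc id)ᵀ)⁻¹.mulVec (Pi.single (Fin.last n) 1)) :
    l2norm (c - Hbar.mulVec ym) =
      β * |Hbar (Fin.last (n + 1)) (Fin.last n)| * |f 0| /
        Real.sqrt (1 + Hbar (Fin.last (n + 1)) (Fin.last n) ^ 2 * (f ⬝ᵥ f)) := by
  classical
  set H : Matrix (Fin (n + 1)) (Fin (n + 1)) ℝ := Hbar.submatrix Fin.castSucc id with hH
  set h : ℝ := Hbar (Fin.last (n + 1)) (Fin.last n) with hhdef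
  set F : ℝ := f ⬝ᵥ f with hF
  set a : ℝ := β * f 0 with ha
  -- `Hᵀ f = e_n`
  have hdetT : IsUnit Hᵀ.det := by rwa [Matrix.det_transpose]
  have hHf : Hᵀ.mulVec f = Pi.single (Fin.last n) 1 := by
    rw [hf, Matrix.mulVec_mulVec, Matrix.mul_nonsing_inv _ hdetT, Matrix.one_mulVec]
  have hfne : f ≠ 0 := by
    intro h0
    rw [h0, Matrix.mulVec_zero] at hHf
    have h1 := congrFun hHf (Fin.last n)
    simp at h1
  have hFnonneg : (0:ℝ) ≤ F := Finset.sum_nonneg fun i _ => mul_self_nonneg _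
  have hFpos : 0 < F := by
    rcases hFnonneg.lt_or_eq with h1 | h1
    · exact h1
    · exact absurd (dotProduct_self_eq_zero.mp h1.symm) hfne
  have hk : (0:ℝ) < 1 + h ^ 2 * F := by positivity
  -- last component identity
  have hyn : ∀ y : Fin (n + 1) → ℝ, y (Fin.last n) = f ⬝ᵥ H.mulVec y := by
    intro y
    rw [Matrix.dotProduct_mulVec, ← Matrix.mulVec_transpose, hHf,
      single_dotProduct, one_mul]
  set b : Fin (n + 1) → ℝ := fun i => if i = 0 then β else 0 with hb
  have hfb : ∀ v : Fin (n + 1) → ℝ, v ⬝ᵥ b = v 0 * β := by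
    intro v
    simp [hb, dotProduct, mul_ite, mul_zero]
  set g : (Fin (n + 1) → ℝ) → ℝ :=
    fun y => (∑ i, (b i - H.mulVec y i) ^ 2) + h ^ 2 * (y (Fin.last n)) ^ 2 with hg
  have hgnonneg : ∀ y, 0 ≤ g y := by
    intro y
    rw [hg]
    positivity
  -- the norm decomposition
  have hnormeq : ∀ y, l2norm (c - Hbar.mulVec y) = Real.sqrt (g y) := by
    intro y
    unfold l2norm
    congr 1
    have h1 : ∀ i : Fin (n + 1),
        (c - Hbar.mulVec y) (Fin.castSucc i) = b i - H.mulVec y i := by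
      intro i
      have e1 : c (Fin.castSucc i) = b i := by
        rw [hc]
        by_cases hi : i = 0
        · subst hi; simp [hb]
        · rw [if_neg (by simpa [Fin.castSucc_eq_zero_iff] using hi)]
          simp [hb, hi]
      have e2 : Hbar.mulVec y (Fin.castSucc i) = H.mulVec y i := rfl
      simp [e1, e2]
    have h2 : (c - Hbar.mulVec y) (Fin.last (n + 1)) = -(h * y (Fin.last n)) := by
      have e1 : c (Fin.last (n + 1)) = 0 := by
        rw [hc, if_neg (by simp [Fin.ext_iff])]
      have e2 : Hbar.mulVec y (Fin.last (n + 1)) = h * y (Fin.last n) := by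
        have e3 : Hbar.mulVec y (Fin.last (n + 1)) =
            ∑ j, Hbar (Fin.last (n + 1)) j * y j := rfl
        rw [e3, Finset.sum_eq_single (Fin.last n)
          (fun j _ hj => by rw [hlastrow j hj, zero_mul])
          (fun hj => absurd (Finset.mem_univ _) hj)]
      simp [e1, e2]
    rw [Fin.sum_univ_castSucc, h2, Finset.sum_congr rfl (fun i _ => by rw [h1 i]), hg]
    ring
  -- lower bound
  have hlow : ∀ y, h ^ 2 * a ^ 2 / (1 + h ^ 2 * F) ≤ g y := by
    intro y
    set u : Fin (n + 1) → ℝ := fun i => b i - H.mulVec y i with hu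
    set s : ℝ := f ⬝ᵥ u with hs
    have hlast : y (Fin.last n) = a - s := by
      rw [hyn y]
      have e1 : H.mulVec y = b - u := by
        funext i
        simp [hu]
      rw [e1, dotProduct_sub, hfb f, hs, ha, mul_comm]
    have e2 : u ⬝ᵥ u = ∑ i, u i ^ 2 := by simp [dotProduct, sq]
    have hCS : s ^ 2 ≤ F * (u ⬝ᵥ u) := by
      have h4 := Finset.sum_mul_sq_le_sq_mul_sq Finset.univ f u
      have e1 : F = ∑ i, f i ^ 2 := by simp [hF, dotProduct, sq]
      have e3 : s = ∑ i, f i * u i := rfl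
      rw [e1, e2, e3]
      exact h4
    have hgy : g y = u ⬝ᵥ u + h ^ 2 * (a - s) ^ 2 := by
      simp only [hg]
      rw [hlast, e2]
    rw [hgy, div_le_iff₀ hk]
    have key : (h ^ 2 * a ^ 2) * F ≤ ((u ⬝ᵥ u + h ^ 2 * (a - s) ^ 2) * (1 + h ^ 2 * F)) * F := by
      nlinarith [mul_le_mul_of_nonneg_left hCS (le_of_lt hk),
        sq_nonneg (s * (1 + h ^ 2 * F) - h ^ 2 * F * a)]
    exact le_of_mul_le_mul_right key hFpos
  -- explicit minimizer
  set d : ℝ := h ^ 2 * a / (1 + h ^ 2 * F) with hd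
  set w : Fin (n + 1) → ℝ := fun i => b i - d * f i with hw
  set ystar : Fin (n + 1) → ℝ := H⁻¹.mulVec w with hystar
  have hHyst : H.mulVec ystar = w := by
    rw [hystar, Matrix.mulVec_mulVec, Matrix.mul_nonsing_inv _ hinv, Matrix.one_mulVec]
  have hupper : g ystar = h ^ 2 * a ^ 2 / (1 + h ^ 2 * F) := by
    have h5 : ∀ i, b i - H.mulVec ystar i = d * f i := by
      intro i
      rw [hHyst]
      simp [hw]
    have hfw : f ⬝ᵥ w = a - d * F := by
      have e1 : f ⬝ᵥ w = f ⬝ᵥ b - d * (f ⬝ᵥ f) := by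
        simp only [dotProduct, Finset.mul_sum, ← Finset.sum_sub_distrib]
        exact Finset.sum_congr rfl fun i _ => by simp [hw]; ring
      rw [e1, hfb f, hF, ha, mul_comm]
    have h6 : ystar (Fin.last n) = a - d * F := by
      rw [hyn ystar, hHyst, hfw]
    have h7 : ∑ i, (b i - H.mulVec ystar i) ^ 2 = d ^ 2 * F := by
      calc ∑ i, (b i - H.mulVec ystar i) ^ 2 = ∑ i, (d * f i) ^ 2 := by
            exact Finset.sum_congr rfl fun i _ => by rw [h5 i]
        _ = d ^ 2 * F := by
            rw [hF, dotProduct, Finset.mul_sum]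
            exact Finset.sum_congr rfl fun i _ => by ring
    simp only [hg]
    rw [h6, h7, hd]
    field_simp
    ring
  -- conclude
  have hgym : g ym = h ^ 2 * a ^ 2 / (1 + h ^ 2 * F) := by
    refine le_antisymm ?_ (hlow ym)
    have h8 := hmin ystar
    rw [hnormeq ym, hnormeq ystar] at h8
    have h9 : g ym ≤ g ystar := by
      by_contra h10
      push_neg at h10
      have := Real.sqrt_lt_sqrt (hgnonneg ystar) h10
      linarith
    rwa [hupper] at h9
  rw [hnormeq ym, hgym]
  have e1 : h ^ 2 * a ^ 2 = (h * a) ^ 2 := by ring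
  rw [e1, Real.sqrt_div (sq_nonneg _), Real.sqrt_sq_eq_abs, abs_mul, ha, abs_mul,
    abs_of_pos hβ]
  ring
end
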